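/- arXiv:1103.4564 — 4 statements merged into one kernel-verified Lean document; each statement's English description precedes it below -/
import Mathlib

section
/- For every h ∈ (0, 1/2), the function α ↦ ρ_h(α) is strictly decreasing on the interval (0, 2h], with ρ_h(2h) = 0, and it maps (0, 2h] bijectively onto the interval [0, arctanh(2h)) (note arccosh(1/√(1 − 4h²)) = arctanh(2h)). -/
open Real Set Filter MeasureTheory

/-- Inverse hyperbolic cosine. -/
noncomputable def arcosh (x : ℝ) : ℝ := Real.log (x + Real.sqrt (x ^ 2 - 1))

/-- The root `φ(h,α)` of the quadratic `(s² − 1) − (2hs − α)²`. -/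
noncomputable def phi (h α : ℝ) : ℝ :=
  (-2 * α * h + Real.sqrt (1 - 4 * h ^ 2 + α ^ 2)) / (1 - 4 * h ^ 2)

/-- The negative root `b(h,α)` of the quadratic `(s² − 1) − (2hs − α)²`. -/
noncomputable def bb (h α : ℝ) : ℝ :=
  -(2 * h * α + Real.sqrt (1 - 4 * h ^ 2 + α ^ 2)) / (1 - 4 * h ^ 2)

/-- The radius `ρ_h(α)` of the base circle of the rotational cmc `h` surface `H_α^h`. -/
noncomputable def rho (h α : ℝ) : ℝ := _root_.arcosh (phi h α)

/-- The derivative `u_α^h` of the profile function of `H_α^h`. -/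
noncomputable def uu (h α ρ : ℝ) : ℝ :=
  (-α + 2 * h * Real.cosh ρ) /
    Real.sqrt (Real.sinh ρ ^ 2 - (-α + 2 * h * Real.cosh ρ) ^ 2)

/-- The profile function `H_α^h` of the rotational cmc `h` surfaces of Sa Earp–Toubiana. -/
noncomputable def HH (h α ρ : ℝ) : ℝ := ∫ w in rho h α..ρ, uu h α w

/-- Inverse hyperbolic tangent. -/
noncomputable def artanh (x : ℝ) : ℝ := Real.log ((1 + x) / (1 - x)) / 2

/-!
On `(-∞, 2h]` the function `φ(h,·)` decreases strictly, because there
`α < 2h √(1 - 4h² + α²)` (for `0 < α < 2h` this is `α² < 4h²` multiplied by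
`1 - 4h² > 0`).
It takes the value `1` at `α = 2h` and `1 / √(1 - 4h²) = cosh (artanh 2h)` at `α = 0`.
Composing with the increasing `arcosh` makes `ρ_h` continuous and strictly decreasing, and the
intermediate value theorem gives the bijection.
-/

lemma arcosh_eq_real_arcosh : _root_.arcosh = Real.arcosh := rfl

lemma artanh_eq_real_artanh {x : ℝ} (hx : x ∈ Icc (-1) 1) :
    _root_.artanh x = Real.artanh x := by
  rw [Real.artanh_eq_half_log hx, _root_.artanh]
  ring

lemma arcosh_one_div_sqrt_one_sub_sq {t : ℝ} (ht : t ∈ Ico 0 1) :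
    _root_.arcosh (1 / √(1 - t ^ 2)) = _root_.artanh t := by
  rw [arcosh_eq_real_arcosh, ← cosh_artanh ⟨by linarith [ht.1], ht.2⟩,
    arcosh_cosh (artanh_nonneg ht.1), artanh_eq_real_artanh ⟨by linarith [ht.1], ht.2.le⟩]

section Phi

variable {h : ℝ}

lemma phi_zero (h : ℝ) : phi h 0 = 1 / √(1 - 4 * h ^ 2) := by
  simp [phi, sqrt_div_self']

lemma phi_two_mul (hh : h ∈ Ioo (0 : ℝ) (1 / 2)) : phi h (2 * h) = 1 := by
  have hc : 1 - 4 * h ^ 2 ≠ 0 := by nlinarith [hh.1, hh.2]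
  rw [phi, show 1 - 4 * h ^ 2 + (2 * h) ^ 2 = 1 by ring, sqrt_one, div_eq_one_iff_eq hc]
  ring

lemma continuous_phi (h : ℝ) : Continuous (phi h) := by
  unfold phi
  fun_prop

lemma lt_two_mul_mul_sqrt (hh : h ∈ Ioo (0 : ℝ) (1 / 2)) {α : ℝ} (hα : α < 2 * h) :
    α < 2 * h * √(1 - 4 * h ^ 2 + α ^ 2) := by
  obtain ⟨h0, h1⟩ := hh
  have hc : 0 < 1 - 4 * h ^ 2 := by nlinarith
  have hS : 0 < 1 - 4 * h ^ 2 + α ^ 2 := by positivity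
  rcases le_or_gt α 0 with hα0 | hα0
  · exact hα0.trans_lt (by positivity)
  · refine lt_of_pow_lt_pow_left₀ 2 (by positivity) ?_
    rw [mul_pow, sq_sqrt hS.le]
    nlinarith [mul_lt_mul_of_pos_left (pow_lt_pow_left₀ hα hα0.le two_ne_zero) hc]

lemma phi_strictAntiOn (hh : h ∈ Ioo (0 : ℝ) (1 / 2)) : StrictAntiOn (phi h) (Iic (2 * h)) := by
  intro a ha b hb hab
  have hc : 0 < 1 - 4 * h ^ 2 := by nlinarith [hh.1, hh.2]
  have hSa : 0 ≤ 1 - 4 * h ^ 2 + a ^ 2 := by positivity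
  have hSb : 0 ≤ 1 - 4 * h ^ 2 + b ^ 2 := by positivity
  have hsa : 0 < √(1 - 4 * h ^ 2 + a ^ 2) := sqrt_pos.2 (by positivity)
  have ha' : a < 2 * h * √(1 - 4 * h ^ 2 + a ^ 2) := lt_two_mul_mul_sqrt hh (hab.trans_le hb)
  have hb' : b ≤ 2 * h * √(1 - 4 * h ^ 2 + b ^ 2) := by
    rcases (show b ≤ 2 * h from hb).lt_or_eq with hb | rfl
    · exact (lt_two_mul_mul_sqrt hh hb).le
    · simp [show 1 - 4 * h ^ 2 + (2 * h) ^ 2 = 1 by ring]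
  unfold phi
  rw [div_lt_div_iff_of_pos_right hc]
  -- with `S_α = 1 - 4h² + α²`:
  -- `(√S_b - √S_a)(√S_b + √S_a) = (b - a)(b + a) < (b - a) 2h (√S_a + √S_b)`
  nlinarith [sq_sqrt hSa, sq_sqrt hSb, sqrt_nonneg (1 - 4 * h ^ 2 + b ^ 2),
    mul_lt_mul_of_pos_left (add_lt_add_of_lt_of_le ha' hb') (sub_pos.2 hab)]

lemma one_le_phi (hh : h ∈ Ioo (0 : ℝ) (1 / 2)) {α : ℝ} (hα : α ≤ 2 * h) :
    1 ≤ phi h α :=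
  phi_two_mul hh ▸ (phi_strictAntiOn hh).antitoneOn hα self_mem_Iic hα

end Phi

section Rho

variable {h : ℝ}

lemma rho_strictAntiOn (hh : h ∈ Ioo (0 : ℝ) (1 / 2)) : StrictAntiOn (rho h) (Iic (2 * h)) :=
  fun _ ha _ hb hab ↦ strictMonoOn_arcosh (one_pos.trans_le (one_le_phi hh hb))
    (one_pos.trans_le (one_le_phi hh ha)) (phi_strictAntiOn hh ha hb hab)

lemma continuousOn_rho (hh : h ∈ Ioo (0 : ℝ) (1 / 2)) : ContinuousOn (rho h) (Iic (2 * h)) :=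
  continuousOn_arcosh.comp (continuous_phi h).continuousOn fun _ hα ↦ one_le_phi hh hα

lemma rho_two_mul (hh : h ∈ Ioo (0 : ℝ) (1 / 2)) : rho h (2 * h) = 0 := by
  rw [rho, phi_two_mul hh, arcosh_eq_real_arcosh, arcosh_zero]

lemma rho_zero (hh : h ∈ Ioo (0 : ℝ) (1 / 2)) : rho h 0 = _root_.artanh (2 * h) := by
  have h2h : 2 * h ∈ Ico 0 1 := ⟨by linarith [hh.1], by linarith [hh.2]⟩
  rw [rho, phi_zero, ← arcosh_one_div_sqrt_one_sub_sq h2h]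
  ring_nf

end Rho

/-- α ↦ ρ_h(α) is strictly decreasing on (0, 2h], vanishes at 2h,
and maps (0, 2h] bijectively onto [0, arctanh(2h)). -/
theorem stmt_2 (h : ℝ) (hh : h ∈ Set.Ioo (0 : ℝ) (1 / 2)) :
    StrictAntiOn (rho h) (Set.Ioc 0 (2 * h)) ∧
    rho h (2 * h) = 0 ∧
    Set.BijOn (rho h) (Set.Ioc 0 (2 * h)) (Set.Ico 0 (_root_.artanh (2 * h))) ∧
    _root_.arcosh (1 / Real.sqrt (1 - 4 * h ^ 2)) = _root_.artanh (2 * h) := by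
  have h2h : (0 : ℝ) ≤ 2 * h := by linarith [hh.1]
  have hanti : StrictAntiOn (rho h) (Icc 0 (2 * h)) :=
    (rho_strictAntiOn hh).mono Icc_subset_Iic_self
  have himage : rho h '' Ioc 0 (2 * h) = Ico (rho h (2 * h)) (rho h 0) :=
    ((continuousOn_rho hh).mono Icc_subset_Iic_self).image_Ioc_of_strictAntiOn h2h hanti
  rw [rho_two_mul hh, rho_zero hh] at himage
  refine ⟨hanti.mono Ioc_subset_Icc_self, rho_two_mul hh, ?_, ?_⟩
  · exact himage ▸ (hanti.mono Ioc_subset_Icc_self).injOn.bijOn_image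
  · rw [← rho_zero hh, rho, phi_zero]
end

section
/- For every h ∈ (0, 1/2), the function α ↦ ρ_h(α) is strictly increasing on the interval [2h, +∞), with ρ_h(2h) = 0, and it maps [2h, +∞) bijectively onto [0, +∞); in particular ρ_h(α) → +∞ as α → +∞. -/
/-!
`ρ_h` is the inverse of the map `t ↦ 2h cosh t + sinh t`, which increases strictly from `2h` to
`+∞` on `[0, ∞)`: for `α = 2h cosh t + sinh t` one has `1 − 4h² + α² = (cosh t + 2h sinh t)²`,
hence `φ(h, α) = cosh t` and `ρ_h(α) = t`.
-/

open Real Set Filter MeasureTheory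

theorem StrictMonoOn.strictMonoOn_of_leftInvOn {α β : Type*} [LinearOrder α] [Preorder β]
    {f : α → β} {g : β → α} {s : Set α} {t : Set β} (hf : StrictMonoOn f s)
    (hfg : LeftInvOn f g t) (hg : MapsTo g t s) : StrictMonoOn g t :=
  fun a ha b hb hab => (hf.lt_iff_lt (hg ha) (hg hb)).1 (by rwa [hfg ha, hfg hb])

noncomputable def rhoInv (h t : ℝ) : ℝ := 2 * h * cosh t + sinh t

section rhoInv

variable {h : ℝ}

theorem rhoInv_zero : rhoInv h 0 = 2 * h := by simp [rhoInv]

theorem continuous_rhoInv : Continuous (rhoInv h) := by unfold rhoInv; fun_prop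

theorem strictMonoOn_rhoInv (h0 : 0 ≤ h) : StrictMonoOn (rhoInv h) (Ici 0) := by
  intro s hs t ht hst
  have hcosh : cosh s < cosh t := cosh_strictMonoOn hs ht hst
  have hsinh : sinh s < sinh t := sinh_strictMono hst
  unfold rhoInv
  nlinarith

theorem tendsto_rhoInv_atTop (h0 : 0 ≤ h) : Tendsto (rhoInv h) atTop atTop := by
  refine tendsto_atTop_mono' _ ?_ tendsto_id
  filter_upwards [eventually_ge_atTop 0] with t ht
  have : 0 ≤ 2 * h * cosh t := by positivity
  have : t ≤ sinh t := self_le_sinh_iff.2 ht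
  simp only [id, rhoInv]
  linarith

theorem bijOn_rhoInv (h0 : 0 ≤ h) : BijOn (rhoInv h) (Ici 0) (Ici (2 * h)) := by
  refine ⟨fun t ht => ?_, (strictMonoOn_rhoInv h0).injOn, ?_⟩
  · rw [mem_Ici, ← rhoInv_zero]
    exact (strictMonoOn_rhoInv h0).monotoneOn self_mem_Ici ht ht
  · rw [← rhoInv_zero]
    exact intermediate_value_Ici continuous_rhoInv.continuousOn (tendsto_rhoInv_atTop h0)

theorem phi_rhoInv (h0 : 0 ≤ h) (hd : 1 - 4 * h ^ 2 ≠ 0) {t : ℝ} (ht : 0 ≤ t) :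
    phi h (rhoInv h t) = cosh t := by
  have hsq : 1 - 4 * h ^ 2 + rhoInv h t ^ 2 = (cosh t + 2 * h * sinh t) ^ 2 := by
    unfold rhoInv
    linear_combination (4 * h ^ 2 - 1) * cosh_sq_sub_sinh_sq t
  have hnonneg : 0 ≤ cosh t + 2 * h * sinh t :=
    add_nonneg (cosh_pos t).le (mul_nonneg (by positivity) (sinh_nonneg_iff.2 ht))
  rw [phi, hsq, sqrt_sq hnonneg, div_eq_iff hd, rhoInv]
  ring

theorem leftInvOn_rho_rhoInv (h0 : 0 ≤ h) (hd : 1 - 4 * h ^ 2 ≠ 0) :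
    LeftInvOn (rho h) (rhoInv h) (Ici 0) := fun t ht => by
  rw [rho, phi_rhoInv h0 hd ht]
  exact Real.arcosh_cosh ht

end rhoInv

/-- α ↦ ρ_h(α) is strictly increasing on [2h, ∞), vanishes at 2h,
maps [2h, ∞) bijectively onto [0, ∞), and tends to +∞. -/
theorem stmt_3 (h : ℝ) (hh : h ∈ Set.Ioo (0 : ℝ) (1 / 2)) :
    StrictMonoOn (rho h) (Set.Ici (2 * h)) ∧
    rho h (2 * h) = 0 ∧
    Set.BijOn (rho h) (Set.Ici (2 * h)) (Set.Ici 0) ∧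
    Filter.Tendsto (rho h) Filter.atTop Filter.atTop := by
  obtain ⟨h0, h2⟩ := hh
  have hd : 1 - 4 * h ^ 2 ≠ 0 := by nlinarith
  have hbij := bijOn_rhoInv h0.le
  have hinv : LeftInvOn (rho h) (rhoInv h) (Ici 0) := leftInvOn_rho_rhoInv h0.le hd
  have hinv' : LeftInvOn (rhoInv h) (rho h) (Ici (2 * h)) :=
    hbij.surjOn.leftInvOn_of_rightInvOn hinv
  have hbij_rho : BijOn (rho h) (Ici (2 * h)) (Ici 0) := hbij.symm ⟨hinv', hinv⟩
  have hmono : StrictMonoOn (rho h) (Ici (2 * h)) :=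
    (strictMonoOn_rhoInv h0.le).strictMonoOn_of_leftInvOn hinv' hbij_rho.mapsTo
  refine ⟨hmono, ?_, hbij_rho, ?_⟩
  · rw [← rhoInv_zero]
    exact hinv self_mem_Ici
  · refine tendsto_atTop_atTop.2 fun M => ⟨rhoInv h |M|, fun α hα => ?_⟩
    have hM : rhoInv h |M| ∈ Ici (2 * h) := hbij.mapsTo (abs_nonneg M)
    calc M ≤ |M| := le_abs_self M
      _ = rho h (rhoInv h |M|) := (hinv (abs_nonneg M)).symm
      _ ≤ rho h α := hmono.monotoneOn hM (mem_Ici.2 (hM.trans hα)) hα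
end

section
/- For every h ∈ (0, 1/2) and every α > 0 with α ≠ 2h: (i) the function u_α^h is integrable on the interval (ρ_h(α), ρ_h(α) + 1), so that H_α^h(ρ) is a finite (convergent improper) integral for every ρ > ρ_h(α); (ii) if α < 2h then u_α^h(ρ) → +∞ as ρ → ρ_h(α)⁺, and if α > 2h then u_α^h(ρ) → −∞ as ρ → ρ_h(α)⁺ (i.e. the rotational graph H_α^h is zero valued and has vertical tangent on its base circle). -/
open Real Set Filter MeasureTheory

/-!
Write `s = cosh ρ`. The radicand of `u_α^h` is the quadratic `(s² - 1) - (2hs - α)²`, which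
factors as `(1 - 4h²)(s - φ)(s - b)` with `b < 0 < 1 < φ`; `φ > 1` is where `α ≠ 2h` enters,
and `ρ_h(α)` is the point where `cosh ρ = φ`. Since `cosh ρ - cosh ρ₀ ≥ sinh ρ₀ (ρ - ρ₀)`, the
radicand is at least a positive multiple of `ρ - ρ₀`, so `|u_α^h| ≤ C (ρ - ρ₀)^(-1/2)`, which is
integrable. At `ρ₀⁺` the radicand tends to `0⁺` while the numerator tends to `2hφ - α`, and
`(1 - 4h²)(2hφ - α) = 2h√(1 - 4h² + α²) - α` has the sign of `2h - α`.
-/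

open Topology

lemma sinh_mul_sub_le_cosh_sub_cosh {x y : ℝ} (hy : 0 ≤ y) (hxy : y ≤ x) :
    sinh y * (x - y) ≤ cosh x - cosh y := by
  have hadd : cosh x = cosh y * cosh (x - y) + sinh y * sinh (x - y) := by
    rw [← cosh_add, add_sub_cancel]
  have hsinh : x - y ≤ sinh (x - y) := self_le_sinh_iff.2 (sub_nonneg.2 hxy)
  have hcosh := one_le_cosh (x - y)
  have := cosh_pos y
  have := sinh_nonneg_iff.2 hy
  nlinarith

lemma integrableOn_Ioo_sub_rpow (a b : ℝ) {r : ℝ} (hr : -1 < r) :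
    IntegrableOn (fun x ↦ (x - a) ^ r) (Ioo a b) := by
  rcases le_or_gt b a with hba | hab
  · simp [Ioo_eq_empty_of_le hba]
  · have := (intervalIntegral.intervalIntegrable_rpow' hr (a := 0) (b := b - a)).comp_sub_right a
    rwa [zero_add, sub_add_cancel, intervalIntegrable_iff_integrableOn_Ioo_of_le hab.le] at this

def radicand (h α s : ℝ) : ℝ := (s ^ 2 - 1) - (-α + 2 * h * s) ^ 2

lemma uu_eq (h α ρ : ℝ) :
    uu h α ρ = (-α + 2 * h * cosh ρ) / √(radicand h α (cosh ρ)) := by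
  rw [uu, radicand, sinh_sq]

lemma uu_eq_mul_inv (h α : ℝ) :
    uu h α = fun ρ ↦ (-α + 2 * h * cosh ρ) * (√(radicand h α (cosh ρ)))⁻¹ :=
  funext fun ρ ↦ by rw [uu_eq, div_eq_mul_inv]

section
variable {h α : ℝ}

lemma radicand_eq_mul (hc : 1 - 4 * h ^ 2 ≠ 0) (hD : 0 ≤ 1 - 4 * h ^ 2 + α ^ 2) (s : ℝ) :
    radicand h α s = (1 - 4 * h ^ 2) * ((s - phi h α) * (s - bb h α)) := by
  have hsd := Real.sq_sqrt hD
  rw [radicand, phi, bb]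
  generalize √(1 - 4 * h ^ 2 + α ^ 2) = d at hsd
  generalize hc' : 1 - 4 * h ^ 2 = c at hc hsd ⊢
  field_simp
  linear_combination hsd + (s ^ 2 * c + α ^ 2) * hc'

lemma one_lt_phi (hc : 0 < 1 - 4 * h ^ 2) (hαh : 0 ≤ h * α) (hne : α ≠ 2 * h) :
    1 < phi h α := by
  have hD : 0 ≤ 1 - 4 * h ^ 2 + α ^ 2 := by positivity
  have hsd := Real.sq_sqrt hD
  have hsq : 0 < (α - 2 * h) ^ 2 := by have := sub_ne_zero.2 hne; positivity
  rw [phi, lt_div_iff₀ hc]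
  nlinarith [Real.sqrt_nonneg (1 - 4 * h ^ 2 + α ^ 2)]

lemma bb_neg (hc : 0 < 1 - 4 * h ^ 2) (hαh : 0 ≤ h * α) : bb h α < 0 := by
  have : 0 < √(1 - 4 * h ^ 2 + α ^ 2) := Real.sqrt_pos.2 (by positivity)
  rw [bb]
  exact div_neg_of_neg_of_pos (by linarith) hc

-- `rho` unfolds to Mathlib's `Real.arcosh`, whose API applies directly.
lemma cosh_rho (hc : 0 < 1 - 4 * h ^ 2) (hαh : 0 ≤ h * α) (hne : α ≠ 2 * h) :
    cosh (rho h α) = phi h α :=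
  Real.cosh_arcosh (one_lt_phi hc hαh hne).le

lemma rho_pos (hc : 0 < 1 - 4 * h ^ 2) (hαh : 0 ≤ h * α) (hne : α ≠ 2 * h) : 0 < rho h α :=
  Real.arcosh_pos (one_lt_phi hc hαh hne)

lemma radicand_cosh_rho (hc : 0 < 1 - 4 * h ^ 2) (hαh : 0 ≤ h * α) (hne : α ≠ 2 * h) :
    radicand h α (cosh (rho h α)) = 0 := by
  rw [radicand_eq_mul hc.ne' (by positivity), cosh_rho hc hαh hne]
  ring

lemma phi_lt_cosh (hc : 0 < 1 - 4 * h ^ 2) (hαh : 0 ≤ h * α) (hne : α ≠ 2 * h) {ρ : ℝ}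
    (hρ : rho h α < ρ) : phi h α < cosh ρ := by
  have hρ₀ := rho_pos hc hαh hne
  rw [← cosh_rho hc hαh hne, Real.cosh_lt_cosh, abs_of_pos hρ₀, abs_of_pos (hρ₀.trans hρ)]
  exact hρ

lemma radicand_cosh_pos (hc : 0 < 1 - 4 * h ^ 2) (hαh : 0 ≤ h * α) (hne : α ≠ 2 * h) {ρ : ℝ}
    (hρ : rho h α < ρ) : 0 < radicand h α (cosh ρ) := by
  have hφ := phi_lt_cosh hc hαh hne hρ
  have hb := bb_neg hc hαh
  rw [radicand_eq_mul hc.ne' (by positivity)]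
  have := one_le_cosh ρ
  exact mul_pos hc (mul_pos (by linarith) (by linarith))

lemma mul_sub_rho_le_radicand (hc : 0 < 1 - 4 * h ^ 2) (hαh : 0 ≤ h * α) (hne : α ≠ 2 * h)
    {ρ : ℝ} (hρ : rho h α < ρ) :
    (1 - 4 * h ^ 2) * (phi h α - bb h α) * sinh (rho h α) * (ρ - rho h α)
      ≤ radicand h α (cosh ρ) := by
  have hφ := phi_lt_cosh hc hαh hne hρ
  have hb := bb_neg hc hαh
  have h1 := one_lt_phi hc hαh hne
  have hρ₀ := rho_pos hc hαh hne
  have hcosh := sinh_mul_sub_le_cosh_sub_cosh hρ₀.le hρ.le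
  rw [cosh_rho hc hαh hne] at hcosh
  have : 0 ≤ sinh (rho h α) * (ρ - rho h α) := by
    have := sinh_pos_iff.2 hρ₀
    nlinarith
  rw [radicand_eq_mul hc.ne' (by positivity)]
  calc _ = (1 - 4 * h ^ 2) * (sinh (rho h α) * (ρ - rho h α) * (phi h α - bb h α)) := by ring
    _ ≤ _ := by gcongr; linarith

lemma abs_uu_le (hh : 0 ≤ h) (hc : 0 < 1 - 4 * h ^ 2) (hα : 0 ≤ α) (hne : α ≠ 2 * h) {b ρ : ℝ}
    (hρ : ρ ∈ Ioo (rho h α) b) :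
    |uu h α ρ| ≤ (α + 2 * h * cosh b) /
      √((1 - 4 * h ^ 2) * (phi h α - bb h α) * sinh (rho h α)) * (ρ - rho h α) ^ (-(1 / 2) : ℝ) := by
  have hαh : 0 ≤ h * α := mul_nonneg hh hα
  have hρ₀ := rho_pos hc hαh hne
  have hK : 0 < (1 - 4 * h ^ 2) * (phi h α - bb h α) * sinh (rho h α) := by
    have := one_lt_phi hc hαh hne
    have := bb_neg hc hαh
    have := sinh_pos_iff.2 hρ₀
    have : 0 < phi h α - bb h α := by linarith
    positivity
  have hnum : |-α + 2 * h * cosh ρ| ≤ α + 2 * h * cosh b := by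
    have : cosh ρ ≤ cosh b := by
      rw [cosh_le_cosh, abs_of_pos (hρ₀.trans hρ.1), abs_of_pos (hρ₀.trans (hρ.1.trans hρ.2))]
      exact hρ.2.le
    have := cosh_pos ρ
    rw [abs_le]
    constructor <;> nlinarith
  have hden := Real.sqrt_le_sqrt (mul_sub_rho_le_radicand hc hαh hne hρ.1)
  rw [Real.sqrt_mul hK.le] at hden
  have ht : 0 < ρ - rho h α := sub_pos.2 hρ.1
  rw [uu_eq, abs_div, abs_of_nonneg (Real.sqrt_nonneg _), Real.rpow_neg ht.le, ← Real.sqrt_eq_rpow,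
    ← div_eq_mul_inv, div_div]
  exact div_le_div₀ (by positivity) hnum (by positivity) hden

lemma integrableOn_uu (hh : 0 ≤ h) (hc : 0 < 1 - 4 * h ^ 2) (hα : 0 ≤ α) (hne : α ≠ 2 * h)
    (b : ℝ) : IntegrableOn (uu h α) (Ioo (rho h α) b) := by
  have hmeas : Measurable (uu h α) := by unfold uu; fun_prop
  exact ((integrableOn_Ioo_sub_rpow (rho h α) b (r := -(1 / 2)) (by norm_num)).const_mul _).mono'
    hmeas.aestronglyMeasurable
    (ae_restrict_of_forall_mem measurableSet_Ioo fun ρ hρ ↦ abs_uu_le hh hc hα hne hρ)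

lemma tendsto_inv_sqrt_radicand (hc : 0 < 1 - 4 * h ^ 2) (hαh : 0 ≤ h * α) (hne : α ≠ 2 * h) :
    Tendsto (fun ρ ↦ (√(radicand h α (cosh ρ)))⁻¹) (𝓝[>] (rho h α)) atTop := by
  refine tendsto_inv_nhdsGT_zero.comp (tendsto_nhdsWithin_iff.2 ⟨?_, ?_⟩)
  · have hcont : Continuous fun ρ ↦ √(radicand h α (cosh ρ)) := by unfold radicand; fun_prop
    simpa [radicand_cosh_rho hc hαh hne] using (hcont.tendsto (rho h α)).mono_left nhdsWithin_le_nhds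
  · filter_upwards [self_mem_nhdsWithin] with ρ hρ
    exact Real.sqrt_pos.2 (radicand_cosh_pos hc hαh hne hρ)

lemma tendsto_uu_numerator (hc : 0 < 1 - 4 * h ^ 2) (hαh : 0 ≤ h * α) (hne : α ≠ 2 * h) :
    Tendsto (fun ρ ↦ -α + 2 * h * cosh ρ) (𝓝[>] (rho h α)) (𝓝 (-α + 2 * h * phi h α)) := by
  rw [← cosh_rho hc hαh hne]
  exact (by fun_prop : Continuous fun ρ ↦ -α + 2 * h * cosh ρ).continuousWithinAt.tendsto

lemma neg_add_two_mul_phi_eq (hc : 0 < 1 - 4 * h ^ 2) :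
    (-α + 2 * h * phi h α) * (1 - 4 * h ^ 2) = 2 * h * √(1 - 4 * h ^ 2 + α ^ 2) - α := by
  rw [phi, add_mul, mul_assoc, div_mul_cancel₀ _ hc.ne']
  ring

lemma neg_add_two_mul_phi_pos (hh : 0 ≤ h) (hc : 0 < 1 - 4 * h ^ 2) (hlt : α < 2 * h) :
    0 < -α + 2 * h * phi h α := by
  have hsd := Real.sq_sqrt (by positivity : 0 ≤ 1 - 4 * h ^ 2 + α ^ 2)
  have := Real.sqrt_nonneg (1 - 4 * h ^ 2 + α ^ 2)
  refine pos_of_mul_pos_left ?_ hc.le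
  rw [neg_add_two_mul_phi_eq hc]
  by_contra! hle
  have h1 : (2 * h * √(1 - 4 * h ^ 2 + α ^ 2)) ^ 2 ≤ α ^ 2 :=
    pow_le_pow_left₀ (by positivity) (by linarith) 2
  rw [mul_pow, hsd] at h1
  have hα : 0 ≤ α := by nlinarith
  nlinarith [mul_pos hc (mul_pos (sub_pos.2 hlt) (by linarith : 0 < 2 * h + α))]

lemma neg_add_two_mul_phi_neg (hh : 0 ≤ h) (hc : 0 < 1 - 4 * h ^ 2) (hgt : 2 * h < α) :
    -α + 2 * h * phi h α < 0 := by
  have hsd := Real.sq_sqrt (by positivity : 0 ≤ 1 - 4 * h ^ 2 + α ^ 2)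
  have := Real.sqrt_nonneg (1 - 4 * h ^ 2 + α ^ 2)
  refine neg_of_mul_neg_left ?_ hc.le
  rw [neg_add_two_mul_phi_eq hc]
  by_contra! hle
  have h1 : α ^ 2 ≤ (2 * h * √(1 - 4 * h ^ 2 + α ^ 2)) ^ 2 :=
    pow_le_pow_left₀ (by linarith) (by linarith) 2
  rw [mul_pow, hsd] at h1
  nlinarith [mul_pos hc (mul_pos (sub_pos.2 hgt) (by linarith : 0 < α + 2 * h))]

theorem tendsto_uu_atTop (hh : 0 ≤ h) (hc : 0 < 1 - 4 * h ^ 2) (hα : 0 ≤ α) (hlt : α < 2 * h) :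
    Tendsto (uu h α) (𝓝[>] (rho h α)) atTop := by
  have hαh : 0 ≤ h * α := mul_nonneg hh hα
  rw [uu_eq_mul_inv]
  exact (tendsto_uu_numerator hc hαh hlt.ne).pos_mul_atTop (neg_add_two_mul_phi_pos hh hc hlt)
    (tendsto_inv_sqrt_radicand hc hαh hlt.ne)

theorem tendsto_uu_atBot (hh : 0 ≤ h) (hc : 0 < 1 - 4 * h ^ 2) (hgt : 2 * h < α) :
    Tendsto (uu h α) (𝓝[>] (rho h α)) atBot := by
  have hαh : 0 ≤ h * α := mul_nonneg hh (by linarith)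
  rw [uu_eq_mul_inv]
  exact (tendsto_uu_numerator hc hαh hgt.ne').neg_mul_atTop (neg_add_two_mul_phi_neg hh hc hgt)
    (tendsto_inv_sqrt_radicand hc hαh hgt.ne')

end

/-- for α ≠ 2h, (i) u_α^h is integrable near the base radius, so
H_α^h is a finite (convergent improper) integral; (ii) u_α^h blows up to +∞
(resp. −∞) at ρ_h(α)⁺ when α < 2h (resp. α > 2h). -/
theorem stmt_6 (h α : ℝ) (hh : h ∈ Set.Ioo (0 : ℝ) (1 / 2)) (hα : 0 < α)
    (hne : α ≠ 2 * h) :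
    MeasureTheory.IntegrableOn (uu h α) (Set.Ioo (rho h α) (rho h α + 1)) ∧
    (α < 2 * h →
      Filter.Tendsto (uu h α) (nhdsWithin (rho h α) (Set.Ioi (rho h α)))
        Filter.atTop) ∧
    (2 * h < α →
      Filter.Tendsto (uu h α) (nhdsWithin (rho h α) (Set.Ioi (rho h α)))
        Filter.atBot) := by
  obtain ⟨hh₀, hh₁⟩ := hh
  have hc : 0 < 1 - 4 * h ^ 2 := by nlinarith
  exact ⟨integrableOn_uu hh₀.le hc hα.le hne _, tendsto_uu_atTop hh₀.le hc hα.le,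
    tendsto_uu_atBot hh₀.le hc⟩
end

section
/- For every h ∈ (0, 1/2), every α ∈ (0, 2h) and every z > 0, the partial derivative with respect to α of ũ_α^h(z) = ( −α + 2h·(z + φ(h,α)) ) / ( √z · √(z + φ(h,α) − b(h,α)) · √((z + φ(h,α))² − 1) ) is strictly negative; i.e. the map α ↦ ũ_α^h(z) has strictly negative derivative at every α ∈ (0, 2h). -/
open Real Set Filter MeasureTheory

/-- The integrand ũ_α^h(z) of H_α^h after the change of variable z = cosh ρ − φ. -/
noncomputable def utilde (h α z : ℝ) : ℝ :=
  (-α + 2 * h * (z + phi h α)) /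
    (Real.sqrt z * Real.sqrt (z + phi h α - bb h α) *
      Real.sqrt ((z + phi h α) ^ 2 - 1))

/-!
With `D = 1 − 4h²` and `s = √(D + α²)` one has `φ − b = 2s/D`, and since `φ` and `b` are the
roots of `(t² − 1) − (2ht − α)² = D (t − φ)(t − b)`, the numerator `N = −α + 2h(z + φ)` and
`Q = z (z + φ − b)` satisfy `(z + φ)² − 1 = N² + D Q`. As `N > 0`, this gives
`ũ = N / √(Q (N² + D Q)) = (Q + D (Q/N)²)^(−1/2)`.
In `α`, `Q = z² + 2zs/D` strictly increases, while `N = 2hz + (2hs − α)/D` strictly decreases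
because `2hα < s`. Hence `Q + D (Q/N)²` has positive derivative and `ũ` a negative one.
-/

lemma exists_pos_hasDerivAt_div {f g : ℝ → ℝ} {f' g' x : ℝ} (hf : HasDerivAt f f' x)
    (hg : HasDerivAt g g' x) (hfx : 0 < f x) (hgx : 0 < g x) (hf' : 0 < f') (hg' : g' < 0) :
    ∃ d > 0, HasDerivAt (fun y => f y / g y) d x := by
  refine ⟨_, div_pos ?_ (by positivity), hf.div hg hgx.ne'⟩
  nlinarith [mul_pos hf' hgx, mul_neg_of_pos_of_neg hfx hg']

lemma exists_pos_hasDerivAt_add_const_mul_sq {f g : ℝ → ℝ} {f' g' x c : ℝ}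
    (hf : HasDerivAt f f' x) (hg : HasDerivAt g g' x) (hc : 0 ≤ c) (hgx : 0 < g x)
    (hf' : 0 < f') (hg' : 0 < g') :
    ∃ d > 0, HasDerivAt (fun y => f y + c * g y ^ 2) d x := by
  refine ⟨_, ?_, hf.add ((hg.pow 2).const_mul c)⟩
  positivity

lemma exists_neg_hasDerivAt_inv_sqrt {f : ℝ → ℝ} {f' x : ℝ} (hf : HasDerivAt f f' x)
    (hfx : 0 < f x) (hf' : 0 < f') :
    ∃ d < 0, HasDerivAt (fun y => (√(f y))⁻¹) d x := by
  have hsqrt : 0 < √(f x) := Real.sqrt_pos.2 hfx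
  refine ⟨_, ?_, (hf.sqrt hfx.ne').inv hsqrt.ne'⟩
  rw [neg_div]
  exact neg_neg_of_pos (by positivity)

lemma div_sqrt_mul_sqrt_eq_inv_sqrt {N Q D : ℝ} (hN : 0 < N) (hQ : 0 ≤ Q) :
    N / (√Q * √(N ^ 2 + D * Q)) = (√(Q + D * (Q / N) ^ 2))⁻¹ := by
  have hprod : Q * (N ^ 2 + D * Q) = N ^ 2 * (Q + D * (Q / N) ^ 2) := by
    field_simp
  rw [← Real.sqrt_mul hQ, hprod, Real.sqrt_mul (sq_nonneg N), Real.sqrt_sq hN.le,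
    div_mul_eq_div_div, div_self hN.ne', one_div]

noncomputable def sqrtDisc (h a : ℝ) : ℝ := √(1 - 4 * h ^ 2 + a ^ 2)

/-- The numerator `−α + 2h(z + φ)` of `ũ`. -/
noncomputable def utildeNum (h z a : ℝ) : ℝ :=
  2 * h * z + (2 * h * sqrtDisc h a - a) / (1 - 4 * h ^ 2)

/-- `z (z + φ − b)`. -/
noncomputable def utildeQuad (h z a : ℝ) : ℝ :=
  z * (z + 2 * sqrtDisc h a / (1 - 4 * h ^ 2))

noncomputable def utildeInvSq (h z a : ℝ) : ℝ :=
  utildeQuad h z a + (1 - 4 * h ^ 2) * (utildeQuad h z a / utildeNum h z a) ^ 2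

section

variable {h : ℝ} (z a : ℝ)

lemma sqrtDisc_sq (hD : 0 < 1 - 4 * h ^ 2) : sqrtDisc h a ^ 2 = 1 - 4 * h ^ 2 + a ^ 2 :=
  Real.sq_sqrt (by positivity)

lemma sqrtDisc_pos (hD : 0 < 1 - 4 * h ^ 2) : 0 < sqrtDisc h a :=
  Real.sqrt_pos.2 (by positivity)

/-- `s² − (2ha)² = D (1 + a²)`. -/
lemma two_mul_mul_lt_sqrtDisc (hD : 0 < 1 - 4 * h ^ 2) : 2 * h * a < sqrtDisc h a := by
  refine lt_of_pow_lt_pow_left₀ 2 (sqrtDisc_pos a hD).le ?_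
  nlinarith [sqrtDisc_sq a hD, mul_pos hD (by positivity : (0 : ℝ) < 1 + a ^ 2)]

/-- `(2hs)² − a² = D (4h² − a²)`. -/
lemma lt_two_mul_mul_sqrtDisc (hD : 0 < 1 - 4 * h ^ 2) (ha0 : 0 < a) (ha : a < 2 * h) :
    a < 2 * h * sqrtDisc h a := by
  have h0 : 0 < h := by linarith
  have hs := sqrtDisc_pos a hD
  refine lt_of_pow_lt_pow_left₀ 2 (by positivity) ?_
  nlinarith [sqrtDisc_sq a hD, mul_pos hD (by nlinarith : 0 < 4 * h ^ 2 - a ^ 2)]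

lemma utildeNum_pos (hD : 0 < 1 - 4 * h ^ 2) (ha0 : 0 < a) (ha : a < 2 * h) (hz : 0 < z) :
    0 < utildeNum h z a := by
  have h0 : 0 < h := by linarith
  have hfrac : 0 < (2 * h * sqrtDisc h a - a) / (1 - 4 * h ^ 2) :=
    div_pos (by linarith [lt_two_mul_mul_sqrtDisc a hD ha0 ha]) hD
  unfold utildeNum
  positivity

lemma utildeQuad_pos (hD : 0 < 1 - 4 * h ^ 2) (hz : 0 < z) : 0 < utildeQuad h z a := by
  have := sqrtDisc_pos a hD
  unfold utildeQuad
  positivity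

lemma utildeInvSq_pos (hD : 0 < 1 - 4 * h ^ 2) (hz : 0 < z) : 0 < utildeInvSq h z a :=
  add_pos_of_pos_of_nonneg (utildeQuad_pos z a hD hz) (by positivity)

lemma phi_eq : phi h a = (sqrtDisc h a - 2 * h * a) / (1 - 4 * h ^ 2) := by
  unfold phi sqrtDisc
  ring

lemma bb_eq : bb h a = -(sqrtDisc h a + 2 * h * a) / (1 - 4 * h ^ 2) := by
  unfold bb sqrtDisc
  ring

lemma neg_add_two_mul_mul_add_phi (hD : 0 < 1 - 4 * h ^ 2) :
    -a + 2 * h * (z + phi h a) = utildeNum h z a := by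
  rw [phi_eq, utildeNum]
  set D := 1 - 4 * h ^ 2 with hD_def
  field_simp [hD.ne']
  linear_combination (-a) * hD_def

lemma mul_add_phi_sub_bb : z * (z + phi h a - bb h a) = utildeQuad h z a := by
  rw [phi_eq, bb_eq, utildeQuad]
  ring

/-- `φ` and `b` are the roots of `(t² − 1) − (2ht − a)² = D (t − φ)(t − b)`. -/
lemma add_phi_sq_sub_one (hD : 0 < 1 - 4 * h ^ 2) :
    (z + phi h a) ^ 2 - 1 = utildeNum h z a ^ 2 + (1 - 4 * h ^ 2) * utildeQuad h z a := by
  have hs := sqrtDisc_sq a hD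
  rw [phi_eq, utildeNum, utildeQuad]
  set D := 1 - 4 * h ^ 2
  field_simp [hD.ne']
  linear_combination D * hs

lemma utilde_eq_inv_sqrt_utildeInvSq (hD : 0 < 1 - 4 * h ^ 2) (ha0 : 0 < a) (ha : a < 2 * h)
    (hz : 0 < z) : utilde h a z = (√(utildeInvSq h z a))⁻¹ := by
  rw [utilde, neg_add_two_mul_mul_add_phi z a hD, ← Real.sqrt_mul hz.le, mul_add_phi_sub_bb,
    add_phi_sq_sub_one z a hD, utildeInvSq]
  exact div_sqrt_mul_sqrt_eq_inv_sqrt (utildeNum_pos z a hD ha0 ha hz)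
    (utildeQuad_pos z a hD hz).le

lemma hasDerivAt_sqrtDisc (hD : 0 < 1 - 4 * h ^ 2) :
    HasDerivAt (sqrtDisc h) (a / sqrtDisc h a) a := by
  have hpoly : HasDerivAt (fun a : ℝ => 1 - 4 * h ^ 2 + a ^ 2) (2 * a) a := by
    simpa using (hasDerivAt_pow 2 a).const_add (1 - 4 * h ^ 2)
  unfold sqrtDisc
  convert hpoly.sqrt (by positivity) using 1
  ring

lemma exists_neg_hasDerivAt_utildeNum (hD : 0 < 1 - 4 * h ^ 2) :
    ∃ d < 0, HasDerivAt (fun a => utildeNum h z a) d a := by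
  have hs := sqrtDisc_pos a hD
  refine ⟨_, ?_, ((((hasDerivAt_sqrtDisc a hD).const_mul (2 * h)).sub (hasDerivAt_id a)).div_const
    (1 - 4 * h ^ 2)).const_add (2 * h * z)⟩
  have : 2 * h * (a / sqrtDisc h a) < 1 := by
    rw [← mul_div_assoc, div_lt_one hs]
    exact two_mul_mul_lt_sqrtDisc a hD
  exact div_neg_of_neg_of_pos (by linarith) hD

lemma exists_pos_hasDerivAt_utildeQuad (hD : 0 < 1 - 4 * h ^ 2) (ha0 : 0 < a) (hz : 0 < z) :
    ∃ d > 0, HasDerivAt (fun a => utildeQuad h z a) d a := by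
  have hs := sqrtDisc_pos a hD
  refine ⟨_, ?_, ((((hasDerivAt_sqrtDisc a hD).const_mul 2).div_const
    (1 - 4 * h ^ 2)).const_add z).const_mul z⟩
  positivity

lemma exists_pos_hasDerivAt_utildeInvSq (hD : 0 < 1 - 4 * h ^ 2) (ha0 : 0 < a)
    (ha : a < 2 * h) (hz : 0 < z) :
    ∃ d > 0, HasDerivAt (fun a => utildeInvSq h z a) d a := by
  obtain ⟨Q', hQ', hQ⟩ := exists_pos_hasDerivAt_utildeQuad z a hD ha0 hz
  obtain ⟨N', hN', hN⟩ := exists_neg_hasDerivAt_utildeNum z a hD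
  have hQpos := utildeQuad_pos z a hD hz
  have hNpos := utildeNum_pos z a hD ha0 ha hz
  obtain ⟨R', hR', hR⟩ := exists_pos_hasDerivAt_div hQ hN hQpos hNpos hQ' hN'
  exact exists_pos_hasDerivAt_add_const_mul_sq hQ hR hD.le (div_pos hQpos hNpos) hQ' hR'

end

/-- for α ∈ (0, 2h) and z > 0, the map α ↦ ũ_α^h(z) has strictly
negative derivative at α. -/
theorem stmt_13 (h α z : ℝ) (hh : h ∈ Set.Ioo (0 : ℝ) (1 / 2))
    (hα : α ∈ Set.Ioo 0 (2 * h)) (hz : 0 < z) :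
    DifferentiableAt ℝ (fun a => utilde h a z) α ∧
    deriv (fun a => utilde h a z) α < 0 := by
  obtain ⟨h0, h12⟩ := hh
  obtain ⟨ha0, ha⟩ := hα
  have hD : 0 < 1 - 4 * h ^ 2 := by nlinarith
  have hev : (fun a => utilde h a z) =ᶠ[nhds α] fun a => (√(utildeInvSq h z a))⁻¹ := by
    filter_upwards [Ioo_mem_nhds ha0 ha] with a ha'
    exact utilde_eq_inv_sqrt_utildeInvSq z a hD ha'.1 ha'.2 hz
  obtain ⟨F', hF', hF⟩ := exists_pos_hasDerivAt_utildeInvSq z α hD ha0 ha hz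
  obtain ⟨d, hd, hderiv⟩ :=
    exists_neg_hasDerivAt_inv_sqrt hF (utildeInvSq_pos z α hD hz) hF'
  refine ⟨hev.differentiableAt_iff.2 hderiv.differentiableAt, ?_⟩
  rw [hev.deriv_eq, hderiv.deriv]
  exact hd
end
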